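/- Let ρ = (−1+√3 i)/2 and 0 < δ < 1/2, and set δ' = (δ/2)√(1 − δ²/4) − (√3/4)δ². Then for every τ in the closed fundamental domain F̄ with |τ − ρ| > δ and |τ + ρ²| > δ, we have Im τ ≥ √3/2 + δ'. -/

import Mathlib

/-- The primitive third root of unity in the upper half-plane. -/
noncomputable def ρ : ℂ := (-1 + Real.sqrt 3 * Complex.I) / 2

/-- The closed fundamental domain for `SL₂(ℤ)` acting on the upper half-plane. -/
def closedFD : Set ℂ :=
  {τ : ℂ | 0 < τ.im ∧ -(1 / 2) ≤ τ.re ∧ τ.re ≤ 1 / 2 ∧ 1 ≤ ‖τ‖}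

/-! The lowest point of `F̄` outside the two `δ`-discs lies on the unit circle at distance `δ` from a
corner. By the symmetry `τ ↦ -τ̄` it suffices to treat the corner `-ρ² = e^{πi/3}`. In the
coordinates `u = 1/2 - Re τ`, `v = Im τ - √3/2` centred at that corner, the constraints of `F̄` and
`|τ + ρ²| ≥ δ` force `4v² + 2√3 δ² v + δ⁴ - δ² ≥ 0`, a quadratic whose positive root is `δ'`;
since `v ≥ 0` on `F̄`, this gives `v ≥ δ'`. -/

open Real

/-- The height, above the corners, of the point of the unit circle at distance `δ` from a corner. -/
noncomputable def cornerOffset (δ : ℝ) : ℝ :=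
  δ / 2 * √(1 - δ ^ 2 / 4) - √3 / 4 * δ ^ 2

lemma corner_quadratic_nonneg {δ u v : ℝ} (hu0 : 0 ≤ u) (hu : u ≤ 1 / 2)
    (hfar : δ ^ 2 ≤ u ^ 2 + v ^ 2) (hout : u ≤ u ^ 2 + v ^ 2 + √3 * v) :
    0 ≤ 4 * v ^ 2 + 2 * √3 * δ ^ 2 * v + δ ^ 4 - δ ^ 2 := by
  have hs : √3 ^ 2 = 3 := sq_sqrt (by norm_num)
  have key : 4 * v ^ 2 + 2 * √3 * δ ^ 2 * v + δ ^ 4 - δ ^ 2 =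
      (u - δ ^ 2 - √3 * v) ^ 2 + (1 - 2 * u) * (u ^ 2 + v ^ 2 - δ ^ 2) +
        2 * u * (u ^ 2 + v ^ 2 + √3 * v - u) := by
    linear_combination (-v ^ 2) * hs
  rw [key]
  have h₁ : 0 ≤ (1 - 2 * u) * (u ^ 2 + v ^ 2 - δ ^ 2) := mul_nonneg (by linarith) (by linarith)
  have h₂ : 0 ≤ 2 * u * (u ^ 2 + v ^ 2 + √3 * v - u) := mul_nonneg (by linarith) (by linarith)
  positivity

lemma cornerOffset_le_of_quadratic_nonneg {δ v : ℝ} (hδ0 : 0 ≤ δ) (hδ2 : δ ≤ 2) (hv : 0 ≤ v)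
    (hQ : 0 ≤ 4 * v ^ 2 + 2 * √3 * δ ^ 2 * v + δ ^ 4 - δ ^ 2) :
    cornerOffset δ ≤ v := by
  set c := √(1 - δ ^ 2 / 4)
  have hc : c ^ 2 = 1 - δ ^ 2 / 4 := sq_sqrt (by nlinarith)
  have hs : √3 ^ 2 = 3 := sq_sqrt (by norm_num)
  have factor : 4 * v ^ 2 + 2 * √3 * δ ^ 2 * v + δ ^ 4 - δ ^ 2 =
      4 * (v - cornerOffset δ) * (v + δ / 2 * c + √3 / 4 * δ ^ 2) := by
    unfold cornerOffset
    linear_combination (δ ^ 2) * hc - (δ ^ 4 / 4) * hs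
  rcases hδ0.eq_or_lt with rfl | hδ
  · simpa [cornerOffset] using hv
  have hpos : 0 < v + δ / 2 * c + √3 / 4 * δ ^ 2 := by
    have : 0 < √3 / 4 * δ ^ 2 := by positivity
    have : 0 ≤ δ / 2 * c := by positivity
    linarith
  rw [factor, mul_nonneg_iff_of_pos_right hpos] at hQ
  linarith

lemma one_le_re_sq_add_im_sq {τ : ℂ} (hτ : τ ∈ closedFD) : 1 ≤ τ.re ^ 2 + τ.im ^ 2 := by
  have h := one_le_pow₀ (n := 2) hτ.2.2.2
  rwa [Complex.sq_norm, Complex.normSq_apply, ← sq, ← sq] at h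

lemma sqrt_three_div_two_le_im {τ : ℂ} (hτ : τ ∈ closedFD) : √3 / 2 ≤ τ.im := by
  have hout := one_le_re_sq_add_im_sq hτ
  obtain ⟨him, hre₁, hre₂, -⟩ := hτ
  have h3 : (√3 / 2) ^ 2 ≤ τ.im ^ 2 := by
    rw [div_pow, sq_sqrt (by norm_num)]
    nlinarith
  exact (pow_le_pow_iff_left₀ (by positivity) him.le two_ne_zero).1 h3

lemma norm_sub_ρ_sq (τ : ℂ) : ‖τ - ρ‖ ^ 2 = (τ.re + 1 / 2) ^ 2 + (τ.im - √3 / 2) ^ 2 := by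
  simp [Complex.sq_norm, Complex.normSq_apply, ρ]
  ring

lemma ρ_sq : ρ ^ 2 = (-1 - √3 * Complex.I) / 2 := by
  have hs : (√3 : ℂ) ^ 2 = 3 := by exact_mod_cast sq_sqrt (by norm_num : (0:ℝ) ≤ 3)
  rw [ρ]
  linear_combination ((√3 : ℂ) ^ 2 / 4) * Complex.I_sq - (1 / 4) * hs

lemma norm_add_ρ_sq_sq (τ : ℂ) :
    ‖τ + ρ ^ 2‖ ^ 2 = (τ.re - 1 / 2) ^ 2 + (τ.im - √3 / 2) ^ 2 := by
  simp [Complex.sq_norm, Complex.normSq_apply, ρ_sq]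
  ring

lemma cornerOffset_le_of_far_from_right_corner {δ x y : ℝ} (hδ0 : 0 ≤ δ) (hδ2 : δ ≤ 2)
    (hx0 : 0 ≤ x) (hx : x ≤ 1 / 2) (hy : √3 / 2 ≤ y) (hout : 1 ≤ x ^ 2 + y ^ 2)
    (hfar : δ ^ 2 ≤ (x - 1 / 2) ^ 2 + (y - √3 / 2) ^ 2) :
    √3 / 2 + cornerOffset δ ≤ y := by
  have hs : √3 ^ 2 = 3 := sq_sqrt (by norm_num)
  have hQ := corner_quadratic_nonneg (δ := δ) (u := 1 / 2 - x) (v := y - √3 / 2)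
    (by linarith) (by linarith) (by linear_combination hfar) (by linear_combination hout + hs / 4)
  linarith [cornerOffset_le_of_quadratic_nonneg hδ0 hδ2 (sub_nonneg.2 hy) hQ]

theorem im_ge_of_far_from_corners {δ : ℝ} (hδ0 : 0 < δ) (hδ : δ < 1 / 2) {τ : ℂ}
    (hτ : τ ∈ closedFD) (h₁ : δ < ‖τ - ρ‖) (h₂ : δ < ‖τ + ρ ^ 2‖) :
    Real.sqrt 3 / 2 + (δ / 2 * Real.sqrt (1 - δ ^ 2 / 4) - Real.sqrt 3 / 4 * δ ^ 2) ≤ τ.im := by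
  have hδ2 : δ ≤ 2 := by linarith
  have hy := sqrt_three_div_two_le_im hτ
  have hout := one_le_re_sq_add_im_sq hτ
  have hfar₁ : δ ^ 2 ≤ (τ.re + 1 / 2) ^ 2 + (τ.im - √3 / 2) ^ 2 :=
    norm_sub_ρ_sq τ ▸ pow_le_pow_left₀ hδ0.le h₁.le 2
  have hfar₂ : δ ^ 2 ≤ (τ.re - 1 / 2) ^ 2 + (τ.im - √3 / 2) ^ 2 :=
    norm_add_ρ_sq_sq τ ▸ pow_le_pow_left₀ hδ0.le h₂.le 2
  obtain ⟨-, hre₁, hre₂, -⟩ := hτ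
  rcases le_total 0 τ.re with hx | hx
  · exact cornerOffset_le_of_far_from_right_corner hδ0.le hδ2 hx hre₂ hy hout hfar₂
  · -- reflect in the imaginary axis, which swaps the two corners
    refine cornerOffset_le_of_far_from_right_corner (x := -τ.re) hδ0.le hδ2 (by linarith)
      (by linarith) hy (by rwa [neg_sq]) ?_
    rwa [show (-τ.re - 1 / 2) ^ 2 = (τ.re + 1 / 2) ^ 2 by ring]
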